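/- Work in the polynomial ring ℚ[x_2, x_3, x_4] and let ĝ(ζ) := ζ + x_2ζ^3 + x_3ζ^4 + x_4ζ^5 ∈ ℚ[x_2,x_3,x_4][[ζ]]. Define Δ̂_1(ζ) := ĝ(ζ) − ζ and Δ̂_{m+1}(ζ) := Δ̂_m(ĝ(ζ)) − Δ̂_m(ζ) for m ≥ 1. Then for every m ≥ 2, the coefficient of ζ^{2m+3} in Δ̂_m equals x_2^{m+1}·(2m+1)!!·Σ_{j=1}^{m} (j−1)/(2j+1) + x_2^{m−1}·x_4·(2m+1)!!·Σ_{j=1}^{m} 1/(2j+1) + x_2^{m−2}·x_3^2·(2m+1)!!·Σ_{j=1}^{m} (2j/(2j+1) − (2j)!!/(2j+1)!!). -/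

import Mathlib

/-- Composition of formal power series: `f.comp g = f ∘ g`, the power series obtained by
substituting `g` into `f`.  (This gives the usual composition whenever the constant
coefficient of `g` is zero.) -/
noncomputable def PowerSeries.comp {R : Type*} [CommSemiring R] (f g : PowerSeries R) :
    PowerSeries R :=
  PowerSeries.mk fun n =>
    ∑ i ∈ Finset.range (n + 1), PowerSeries.coeff i f * PowerSeries.coeff n (g ^ i)

/-- The polynomial ring `ℚ[x₂, x₃, x₄]`, with `x₂ = X 0`, `x₃ = X 1`, `x₄ = X 2`. -/
abbrev Rq : Type := MvPolynomial (Fin 3) ℚ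

/-- The power series `ĝ(ζ) = ζ + x₂ζ³ + x₃ζ⁴ + x₄ζ⁵` over `ℚ[x₂, x₃, x₄]`. -/
noncomputable def ghat : PowerSeries Rq :=
  PowerSeries.X
    + PowerSeries.C (R := Rq) (MvPolynomial.X 0) * PowerSeries.X ^ 3
    + PowerSeries.C (R := Rq) (MvPolynomial.X 1) * PowerSeries.X ^ 4
    + PowerSeries.C (R := Rq) (MvPolynomial.X 2) * PowerSeries.X ^ 5

/-!
Write `ĝ = ζ (1 + u)` with `u = x₂ζ² + x₃ζ³ + x₄ζ⁴`. Then `[ζ^(i+d)] ĝ^i = [ζ^d] (1 + u)^i`, and for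
`d < 6` only `1 + i u + (i choose 2) u²` contributes because `u³ = O(ζ⁶)`. Hence if `D = O(ζ^p)`,
then `D ∘ ĝ - D = O(ζ^(p+2))` and its coefficients in degrees `p + 2, p + 3, p + 4` are explicit
combinations of the first three coefficients of `D`. So `Δ̂_m = O(ζ^(2m+1))`, and its coefficients
`a_m, b_m, c_m` in degrees `2m+1, 2m+2, 2m+3` obey the triangular recursion
`a_{m+1} = (2m+1) x₂ a_m`, `b_{m+1} = (2m+2) x₂ b_m + (2m+1) x₃ a_m`,
`c_{m+1} = (2m+3) x₂ c_m + (2m+2) x₃ b_m + ((2m+1) x₄ + (2m+1 choose 2) x₂²) a_m`.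
Thus `a_m = (2m-1)‼ x₂^m` and `b_m = ((2m+1)‼ - (2m)‼) x₂^(m-1) x₃`, and dividing the last
recursion by `(2m+3)‼` turns it into the partial sums over `j` in the closed form of `c_m`.
-/

open Nat

open PowerSeries

theorem PowerSeries.coeff_comp {R : Type*} [CommSemiring R] (f g : R⟦X⟧) (n : ℕ) :
    coeff n (f.comp g) = ∑ i ∈ Finset.range (n + 1), coeff i f * coeff n (g ^ i) :=
  coeff_mk _ _

theorem exists_one_add_pow_eq_add_pow_three_mul {A : Type*} [CommSemiring A] (u : A) (i : ℕ) :
    ∃ w, (1 + u) ^ i = 1 + i * u + i.choose 2 * u ^ 2 + u ^ 3 * w := by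
  induction i with
  | zero => exact ⟨0, by simp⟩
  | succ i ih =>
    obtain ⟨w, hw⟩ := ih
    refine ⟨i.choose 2 + w * (1 + u), ?_⟩
    rw [pow_succ, hw, Nat.choose_succ_succ', Nat.choose_one_right]
    push_cast
    ring

section PerturbedIdentity

variable {R : Type*} [CommRing R] (a b c : R)

noncomputable def gSeries : R⟦X⟧ := X + C a * X ^ 3 + C b * X ^ 4 + C c * X ^ 5

theorem coeff_gSeries_pow_add (i : ℕ) {d : ℕ} (hd : d < 6) :
    coeff (i + d) (gSeries a b c ^ i) =
      coeff d 1 + i * coeff d (X ^ 2 * (C a + C b * X + C c * X ^ 2))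
        + i.choose 2 * coeff d (X ^ 4 * (C a + C b * X + C c * X ^ 2) ^ 2) := by
  set v : R⟦X⟧ := C a + C b * X + C c * X ^ 2
  obtain ⟨w, hw⟩ := exists_one_add_pow_eq_add_pow_three_mul (X ^ 2 * v) i
  have hg : gSeries a b c = X * (1 + X ^ 2 * v) := by simp only [gSeries, v]; ring
  rw [hg, mul_pow, add_comm i d, coeff_X_pow_mul, hw, show (X ^ 2 * v) ^ 2 = X ^ 4 * v ^ 2 by ring,
    show (X ^ 2 * v) ^ 3 * w = X ^ 6 * (v ^ 3 * w) by ring]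
  simp only [map_add, ← map_natCast (C (R := R)), coeff_C_mul, coeff_X_pow_mul' _ 6 d,
    if_neg (show ¬6 ≤ d by omega), add_zero]

theorem coeff_gSeries_pow_self (i : ℕ) : coeff i (gSeries a b c ^ i) = 1 := by
  simpa [coeff_X_pow_mul'] using coeff_gSeries_pow_add a b c i (d := 0) (by norm_num)

theorem coeff_gSeries_pow_add_one (i : ℕ) : coeff (i + 1) (gSeries a b c ^ i) = 0 := by
  simpa [coeff_X_pow_mul', coeff_one] using coeff_gSeries_pow_add a b c i (d := 1) (by norm_num)

theorem coeff_gSeries_pow_add_two (i : ℕ) : coeff (i + 2) (gSeries a b c ^ i) = i * a := by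
  simpa [coeff_X_pow_mul', coeff_one] using coeff_gSeries_pow_add a b c i (d := 2) (by norm_num)

theorem coeff_gSeries_pow_add_three (i : ℕ) : coeff (i + 3) (gSeries a b c ^ i) = i * b := by
  simpa [coeff_X_pow_mul', coeff_one] using coeff_gSeries_pow_add a b c i (d := 3) (by norm_num)

theorem coeff_gSeries_pow_add_four (i : ℕ) :
    coeff (i + 4) (gSeries a b c ^ i) = i * c + i.choose 2 * a ^ 2 := by
  simpa [coeff_X_pow_mul', coeff_one, coeff_X] using
    coeff_gSeries_pow_add a b c i (d := 4) (by norm_num)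

variable {a b c} {D : R⟦X⟧} {p : ℕ}

theorem coeff_comp_gSeries_sub_self (n : ℕ) :
    coeff n (D.comp (gSeries a b c) - D) =
      ∑ i ∈ Finset.range n, coeff i D * coeff n (gSeries a b c ^ i) := by
  rw [map_sub, coeff_comp, Finset.sum_range_succ, coeff_gSeries_pow_self, mul_one,
    add_sub_cancel_right]

theorem coeff_comp_gSeries_sub_self_add (hD : ∀ k < p, coeff k D = 0) (j : ℕ) :
    coeff (p + j) (D.comp (gSeries a b c) - D) =
      ∑ i ∈ Finset.range j, coeff (p + i) D * coeff (p + j) (gSeries a b c ^ (p + i)) := by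
  rw [coeff_comp_gSeries_sub_self, Finset.sum_range_add, Finset.sum_eq_zero, zero_add]
  intro i hi
  rw [hD i (Finset.mem_range.1 hi), zero_mul]

theorem coeff_comp_gSeries_sub_self_of_lt (hD : ∀ k < p, coeff k D = 0) {n : ℕ}
    (hn : n < p + 2) : coeff n (D.comp (gSeries a b c) - D) = 0 := by
  rw [coeff_comp_gSeries_sub_self]
  refine Finset.sum_eq_zero fun i hi => ?_
  rcases lt_or_ge i p with hip | hip
  · rw [hD i hip, zero_mul]
  · obtain ⟨rfl, rfl⟩ : i = p ∧ n = p + 1 := by grind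
    rw [coeff_gSeries_pow_add_one, mul_zero]

theorem coeff_comp_gSeries_sub_self_add_two (hD : ∀ k < p, coeff k D = 0) :
    coeff (p + 2) (D.comp (gSeries a b c) - D) = p * a * coeff p D := by
  rw [coeff_comp_gSeries_sub_self_add hD]
  simp only [Finset.sum_range_succ, Finset.sum_range_zero, zero_add]
  rw [add_zero, coeff_gSeries_pow_add_two, coeff_gSeries_pow_add_one]
  ring

theorem coeff_comp_gSeries_sub_self_add_three (hD : ∀ k < p, coeff k D = 0) :
    coeff (p + 3) (D.comp (gSeries a b c) - D) =
      (p + 1) * a * coeff (p + 1) D + p * b * coeff p D := by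
  rw [coeff_comp_gSeries_sub_self_add hD]
  simp only [Finset.sum_range_succ, Finset.sum_range_zero, zero_add]
  rw [add_zero, coeff_gSeries_pow_add_three, coeff_gSeries_pow_add_two, coeff_gSeries_pow_add_one]
  push_cast
  ring

theorem coeff_comp_gSeries_sub_self_add_four (hD : ∀ k < p, coeff k D = 0) :
    coeff (p + 4) (D.comp (gSeries a b c) - D) =
      (p + 2) * a * coeff (p + 2) D + (p + 1) * b * coeff (p + 1) D
        + (p * c + p.choose 2 * a ^ 2) * coeff p D := by
  rw [coeff_comp_gSeries_sub_self_add hD]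
  simp only [Finset.sum_range_succ, Finset.sum_range_zero, zero_add]
  rw [add_zero, coeff_gSeries_pow_add_four, coeff_gSeries_pow_add_three, coeff_gSeries_pow_add_two,
    coeff_gSeries_pow_add_one]
  push_cast
  ring

theorem gSeries_sub_X : gSeries a b c - X = C a * X ^ 3 + C b * X ^ 4 + C c * X ^ 5 := by
  unfold gSeries
  ring

end PerturbedIdentity

theorem doubleFactorial_mul_sum_Icc_succ (f : ℕ → ℚ) (m : ℕ) :
    ((2 * (m + 1) + 1)‼ : ℚ) * ∑ j ∈ Finset.Icc 1 (m + 1), f j =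
      (2 * m + 3) * ((2 * m + 1)‼ * ∑ j ∈ Finset.Icc 1 m, f j) + (2 * m + 3)‼ * f (m + 1) := by
  rw [Finset.sum_Icc_succ_top (by omega), show 2 * (m + 1) + 1 = 2 * m + 1 + 2 by ring,
    Nat.doubleFactorial_add_two]
  push_cast
  ring

theorem doubleFactorial_mul_sum_sub_one_div_succ (m : ℕ) :
    ((2 * (m + 1) + 1)‼ : ℚ) * ∑ j ∈ Finset.Icc 1 (m + 1), ((j : ℚ) - 1) / (2 * (j : ℚ) + 1) =
      (2 * m + 3) * ((2 * m + 1)‼ * ∑ j ∈ Finset.Icc 1 m, ((j : ℚ) - 1) / (2 * (j : ℚ) + 1))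
        + m * (2 * m + 1)‼ := by
  rw [doubleFactorial_mul_sum_Icc_succ, Nat.doubleFactorial_add_two]
  push_cast
  field_simp
  ring

theorem doubleFactorial_mul_sum_one_div_succ (m : ℕ) :
    ((2 * (m + 1) + 1)‼ : ℚ) * ∑ j ∈ Finset.Icc 1 (m + 1), 1 / (2 * (j : ℚ) + 1) =
      (2 * m + 3) * ((2 * m + 1)‼ * ∑ j ∈ Finset.Icc 1 m, 1 / (2 * (j : ℚ) + 1))
        + (2 * m + 1)‼ := by
  rw [doubleFactorial_mul_sum_Icc_succ, Nat.doubleFactorial_add_two]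
  push_cast
  field_simp
  ring

theorem doubleFactorial_mul_sum_sub_doubleFactorial_div_succ (m : ℕ) :
    ((2 * (m + 1) + 1)‼ : ℚ) * ∑ j ∈ Finset.Icc 1 (m + 1),
        (2 * (j : ℚ) / (2 * (j : ℚ) + 1) - ((2 * j)‼ : ℚ) / ((2 * j + 1)‼ : ℚ)) =
      (2 * m + 3) * ((2 * m + 1)‼ * ∑ j ∈ Finset.Icc 1 m,
        (2 * (j : ℚ) / (2 * (j : ℚ) + 1) - ((2 * j)‼ : ℚ) / ((2 * j + 1)‼ : ℚ)))
        + (2 * m + 2) * ((2 * m + 1)‼ - (2 * m)‼) := by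
  rw [doubleFactorial_mul_sum_Icc_succ, show 2 * (m + 1) = 2 * m + 2 by ring,
    Nat.doubleFactorial_add_two, Nat.doubleFactorial_add_two (2 * m)]
  have : ((2 * m + 1)‼ : ℚ) ≠ 0 := by positivity
  push_cast
  field_simp
  ring

local notation "x₂" => (MvPolynomial.X 0 : Rq)
local notation "x₃" => (MvPolynomial.X 1 : Rq)
local notation "x₄" => (MvPolynomial.X 2 : Rq)

noncomputable def deltaHatThirdCoeff (m : ℕ) : Rq :=
  x₂ ^ (m + 1) *
      MvPolynomial.C ((((2 * m + 1)‼ : ℕ) : ℚ) *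
        ∑ j ∈ Finset.Icc 1 m, ((j : ℚ) - 1) / (2 * (j : ℚ) + 1))
    + x₂ ^ (m - 1) * x₄ *
        MvPolynomial.C ((((2 * m + 1)‼ : ℕ) : ℚ) * ∑ j ∈ Finset.Icc 1 m, 1 / (2 * (j : ℚ) + 1))
    + x₂ ^ (m - 2) * x₃ ^ 2 *
        MvPolynomial.C ((((2 * m + 1)‼ : ℕ) : ℚ) *
          ∑ j ∈ Finset.Icc 1 m,
            (2 * (j : ℚ) / (2 * (j : ℚ) + 1) - (((2 * j)‼ : ℕ) : ℚ) / (((2 * j + 1)‼ : ℕ) : ℚ)))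

theorem deltaHatThirdCoeff_add_three (n : ℕ) :
    deltaHatThirdCoeff (n + 3) =
      (2 * n + 7) * x₂ * deltaHatThirdCoeff (n + 2)
        + (2 * n + 6) * x₃ * (((2 * n + 5)‼ - (2 * n + 4)‼) * x₂ ^ (n + 1) * x₃)
        + ((2 * n + 5) * x₄ + (2 * n + 5).choose 2 * x₂ ^ 2) * ((2 * n + 3)‼ * x₂ ^ (n + 2)) := by
  have hodd : ((2 * n + 5)‼ : Rq) = (2 * n + 5) * (2 * n + 3)‼ := by
    rw [Nat.doubleFactorial_add_two]
    push_cast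
    ring
  have hchoose : (2 * n + 5).choose 2 = (2 * n + 5) * (n + 2) := by
    have := Nat.add_one_mul_choose_eq (2 * n + 4) 1
    simp only [Nat.choose_one_right] at this
    linarith
  simp only [deltaHatThirdCoeff, Nat.reduceSubDiff]
  rw [doubleFactorial_mul_sum_sub_one_div_succ, doubleFactorial_mul_sum_one_div_succ,
    doubleFactorial_mul_sum_sub_doubleFactorial_div_succ]
  simp only [map_add, map_mul, map_sub, map_natCast, map_ofNat, hchoose]
  rw [show 2 * (n + 2) + 1 = 2 * n + 5 by ring, show 2 * (n + 2) = 2 * n + 4 by ring, hodd]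
  push_cast
  ring

theorem deltaHatThirdCoeff_two : deltaHatThirdCoeff 2 = 3 * x₂ ^ 3 + 8 * x₂ * x₄ + 4 * x₃ ^ 2 := by
  unfold deltaHatThirdCoeff
  norm_num [Finset.sum_Icc_succ_top, Nat.doubleFactorial, -MvPolynomial.C_mul, -MvPolynomial.C_add,
    -MvPolynomial.C_sub]
  simp only [map_ofNat]
  ring

theorem ghat_eq_gSeries : ghat = gSeries x₂ x₃ x₄ := rfl

section DeltaHat

variable {Δ : ℕ → Rq⟦X⟧} (hΔ1 : Δ 1 = ghat - X)
  (hΔ : ∀ m : ℕ, 1 ≤ m → Δ (m + 1) = (Δ m).comp ghat - Δ m)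
include hΔ1 hΔ

theorem coeff_deltaHat_of_lt {n k : ℕ} (hk : k < 2 * n + 3) : coeff k (Δ (n + 1)) = 0 := by
  induction n generalizing k with
  | zero =>
    rw [hΔ1, ghat_eq_gSeries, gSeries_sub_X]
    interval_cases k <;> simp [coeff_X_pow]
  | succ n ih =>
    rw [hΔ _ (by omega), ghat_eq_gSeries]
    exact coeff_comp_gSeries_sub_self_of_lt (fun k hk => ih hk) (by omega)

theorem coeff_deltaHat_two_mul_add_three (n : ℕ) :
    coeff (2 * n + 3) (Δ (n + 1)) = (2 * n + 1)‼ * x₂ ^ (n + 1) := by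
  induction n with
  | zero => simp [hΔ1, ghat_eq_gSeries, gSeries_sub_X, coeff_X_pow]
  | succ n ih =>
    rw [hΔ _ (by omega), ghat_eq_gSeries, show 2 * (n + 1) + 3 = 2 * n + 3 + 2 by ring,
      coeff_comp_gSeries_sub_self_add_two (fun k => coeff_deltaHat_of_lt hΔ1 hΔ), ih,
      show 2 * (n + 1) + 1 = 2 * n + 1 + 2 by ring, Nat.doubleFactorial_add_two]
    push_cast
    ring

theorem coeff_deltaHat_two_mul_add_four (n : ℕ) :
    coeff (2 * n + 4) (Δ (n + 1)) = ((2 * n + 3)‼ - (2 * n + 2)‼) * x₂ ^ n * x₃ := by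
  induction n with
  | zero => norm_num [hΔ1, ghat_eq_gSeries, gSeries_sub_X, coeff_X_pow, Nat.doubleFactorial]
  | succ n ih =>
    rw [hΔ _ (by omega), ghat_eq_gSeries, show 2 * (n + 1) + 4 = 2 * n + 3 + 3 by ring,
      coeff_comp_gSeries_sub_self_add_three (fun k => coeff_deltaHat_of_lt hΔ1 hΔ), ih,
      coeff_deltaHat_two_mul_add_three hΔ1 hΔ,
      show 2 * (n + 1) + 3 = 2 * n + 1 + 2 + 2 by ring, show 2 * (n + 1) + 2 = 2 * n + 2 + 2 by ring]
    simp only [Nat.doubleFactorial_add_two]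
    push_cast
    ring

theorem coeff_deltaHat_two_mul_add_seven (n : ℕ) :
    coeff (2 * n + 7) (Δ (n + 2)) = deltaHatThirdCoeff (n + 2) := by
  induction n with
  | zero =>
    rw [hΔ 1 le_rfl, ghat_eq_gSeries,
      coeff_comp_gSeries_sub_self_add_four (p := 3) (fun k => coeff_deltaHat_of_lt hΔ1 hΔ (n := 0)),
      deltaHatThirdCoeff_two]
    simp only [hΔ1, ghat_eq_gSeries, gSeries_sub_X, map_add, coeff_C_mul, coeff_X_pow]
    norm_num
    ring
  | succ n ih =>
    rw [hΔ _ (by omega), ghat_eq_gSeries, show 2 * (n + 1) + 7 = 2 * (n + 1) + 3 + 4 by ring,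
      coeff_comp_gSeries_sub_self_add_four (fun k => coeff_deltaHat_of_lt hΔ1 hΔ),
      show 2 * (n + 1) + 3 + 2 = 2 * n + 7 by ring, ih,
      show 2 * (n + 1) + 3 + 1 = 2 * (n + 1) + 4 by ring, coeff_deltaHat_two_mul_add_four hΔ1 hΔ,
      coeff_deltaHat_two_mul_add_three hΔ1 hΔ, deltaHatThirdCoeff_add_three]
    push_cast
    ring_nf

end DeltaHat

theorem delta_hat_third_coefficient
    (Δ : ℕ → PowerSeries Rq)
    (hΔ1 : Δ 1 = ghat - PowerSeries.X)
    (hΔ : ∀ m : ℕ, 1 ≤ m → Δ (m + 1) = PowerSeries.comp (Δ m) ghat - Δ m) :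
    ∀ m : ℕ, 2 ≤ m →
      PowerSeries.coeff (R := Rq) (2 * m + 3) (Δ m) =
        MvPolynomial.X 0 ^ (m + 1) *
            MvPolynomial.C ((((2 * m + 1)‼ : ℕ) : ℚ) *
              ∑ j ∈ Finset.Icc 1 m, ((j : ℚ) - 1) / (2 * (j : ℚ) + 1))
          + MvPolynomial.X 0 ^ (m - 1) * MvPolynomial.X 2 *
              MvPolynomial.C ((((2 * m + 1)‼ : ℕ) : ℚ) *
                ∑ j ∈ Finset.Icc 1 m, 1 / (2 * (j : ℚ) + 1))
          + MvPolynomial.X 0 ^ (m - 2) * MvPolynomial.X 1 ^ 2 *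
              MvPolynomial.C ((((2 * m + 1)‼ : ℕ) : ℚ) *
                ∑ j ∈ Finset.Icc 1 m,
                  (2 * (j : ℚ) / (2 * (j : ℚ) + 1)
                    - (((2 * j)‼ : ℕ) : ℚ) / (((2 * j + 1)‼ : ℕ) : ℚ))) := by
  intro m hm
  obtain ⟨n, rfl⟩ := Nat.exists_eq_add_of_le' hm
  rw [show 2 * (n + 2) + 3 = 2 * n + 7 by ring]
  exact coeff_deltaHat_two_mul_add_seven hΔ1 hΔ n
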